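/- arXiv:2007.10874 — 2 statements merged into one kernel-verified Lean document; each statement's English description precedes it below -/
import Mathlib

section
/- Let (xi_k)_{k in Z} be a sequence of independent random variables with P(xi_k = 1) = P(xi_k = 0) = 1/2 for all k, and define the stationary process X_t = sum_{j=0}^infinity 2^{-j-1} xi_{t-j} for t in Z. Then X is theta-lex weakly dependent; in fact its theta-lex coefficients satisfy theta(h) <= 2^{-h} for all h in N, so theta(h) -> 0 as h -> infinity. -/
open MeasureTheory Filter Topology ProbabilityTheory

noncomputable section

/-- Covariance of two real-valued random variables. -/
def cov {Ω : Type*} [MeasurableSpace Ω] (P : Measure Ω) (f g : Ω → ℝ) : ℝ :=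
  (∫ ω, f ω * g ω ∂P) - (∫ ω, f ω ∂P) * (∫ ω, g ω ∂P)

/-- The set `V_j^h = {s : s ≤ j and |j - s| ≥ h}` for the natural order on `ℤ`. -/
def VSet (j : ℤ) (h : ℝ) : Set ℤ :=
  {s | s ≤ j ∧ h ≤ |((j - s : ℤ) : ℝ)|}

/-- `θ : ℝ → ℝ` is a family of θ-lex coefficients for the process `X`. -/
def HasThetaLexBound {Ω : Type*} [MeasurableSpace Ω] (P : Measure Ω)
    (X : ℤ → Ω → ℝ) (θ : ℝ → ℝ) : Prop :=
  ∀ (h : ℝ), 0 < h → ∀ (u : ℕ) (j : ℤ) (Γ : Fin u → ℤ),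
    Function.Injective Γ → (∀ i, Γ i ∈ VSet j h) →
    ∀ (F : (Fin u → ℝ) → ℝ) (G : ℝ → ℝ) (MF LG : ℝ),
      Measurable F → (∀ x, |F x| ≤ MF) →
      Measurable G → (∃ MG, ∀ x, |G x| ≤ MG) →
      (∀ x y, |G x - G y| ≤ LG * |x - y|) →
      |cov P (fun ω => F (fun i => X (Γ i) ω)) (fun ω => G (X j ω))| ≤ θ h * MF * LG

/-!
Split `X_j = Y + R` with `Y = ∑_{k<h} 2^{-k-1} ξ_{j-k}`, which only involves innovations later
than those of every `X_s`, `s ≤ j - h`, and a remainder `R ∈ [0, 2^{-h}]`. Then `G(X_j)` is within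
`Lip(G) 2^{-h-1}` of `G(Y + 2^{-h-1})`, which is independent of `F(X_Γ)`, and swapping the two
changes the covariance by at most `2 ‖F‖∞ Lip(G) 2^{-h-1} = 2^{-h} ‖F‖∞ Lip(G)`. Only the tail
sums of the weights enter: for any causal moving average `∑ₖ aₖ η_{t-k}` with `aₖ ≥ 0` summable
and independent `[0, 1]`-valued `η`, the same argument gives `θ(h) ≤ ∑_{k ≥ h} aₖ`.
-/

section Covariance

variable {Ω : Type*} [MeasurableSpace Ω] {P : Measure Ω}

lemma cov_congr_ae {f f' g g' : Ω → ℝ} (hf : f =ᵐ[P] f') (hg : g =ᵐ[P] g') :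
    cov P f g = cov P f' g' := by
  unfold cov
  have hfg : (fun ω => f ω * g ω) =ᵐ[P] fun ω => f' ω * g' ω := hf.mul hg
  rw [integral_congr_ae hf, integral_congr_ae hg, integral_congr_ae hfg]

lemma abs_integral_le_of_forall_abs_le [IsProbabilityMeasure P] {f : Ω → ℝ} {C : ℝ}
    (h : ∀ ω, |f ω| ≤ C) : |∫ ω, f ω ∂P| ≤ C := by
  have h' : ∀ᵐ ω ∂P, ‖f ω‖ ≤ C := ae_of_all _ h
  simpa using norm_integral_le_of_norm_le_const h'

theorem abs_cov_le_of_indepFun_of_abs_sub_le [IsProbabilityMeasure P] {f g g' : Ω → ℝ}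
    {M D : ℝ} (hf : AEStronglyMeasurable f P) (hfM : ∀ ω, |f ω| ≤ M) (hg : Integrable g P)
    (hg' : AEStronglyMeasurable g' P) (hD : ∀ ω, |g ω - g' ω| ≤ D) (hind : IndepFun f g' P) :
    |cov P f g| ≤ 2 * M * D := by
  set d : Ω → ℝ := fun ω => g ω - g' ω
  have hd : Integrable d P := .of_bound (hg.aestronglyMeasurable.sub hg') D (ae_of_all _ hD)
  have hg'i : Integrable g' P := (hg.sub hd).congr (ae_of_all _ fun ω => by simp [d])
  have hfM' : ∀ᵐ ω ∂P, ‖f ω‖ ≤ M := ae_of_all _ hfM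
  have hcov : cov P f g = (∫ ω, f ω * d ω ∂P) - (∫ ω, f ω ∂P) * ∫ ω, d ω ∂P := by
    have hfd : ∫ ω, f ω * d ω ∂P = (∫ ω, f ω * g ω ∂P) - ∫ ω, f ω * g' ω ∂P := by
      simp only [d, mul_sub]
      exact integral_sub (hg.bdd_mul hf hfM') (hg'i.bdd_mul hf hfM')
    rw [cov, hfd, integral_sub hg hg'i, hind.integral_fun_mul_eq_mul_integral hf hg']
    ring
  have hM : 0 ≤ M := (abs_nonneg _).trans (abs_integral_le_of_forall_abs_le (P := P) hfM)
  calc |cov P f g|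
      ≤ |∫ ω, f ω * d ω ∂P| + |∫ ω, f ω ∂P| * |∫ ω, d ω ∂P| := by
        rw [hcov, ← abs_mul]; exact abs_sub _ _
    _ ≤ M * D + M * D := by
        gcongr
        · exact abs_integral_le_of_forall_abs_le fun ω => by
            rw [abs_mul]; exact mul_le_mul (hfM ω) (hD ω) (abs_nonneg _) hM
        · exact abs_integral_le_of_forall_abs_le hfM
        · exact abs_integral_le_of_forall_abs_le hD
    _ = 2 * M * D := by ring

end Covariance

theorem ProbabilityTheory.iIndepFun.indepFun_of_measurable_biSup_compl
    {Ω ι β γ δ : Type*} [MeasurableSpace Ω] {P : Measure Ω} [mβ : MeasurableSpace β]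
    [MeasurableSpace γ] [MeasurableSpace δ] {η : ι → Ω → β} (hηm : ∀ i, Measurable (η i))
    (hη : iIndepFun η P) (A : Set ι) {f : Ω → γ} {g : Ω → δ}
    (hf : Measurable[⨆ i ∈ A, mβ.comap (η i)] f) (hg : Measurable[⨆ i ∈ Aᶜ, mβ.comap (η i)] g) :
    IndepFun f g P := by
  rw [IndepFun_iff_Indep]
  exact indep_of_indep_of_le_left
    (indep_of_indep_of_le_right (indep_biSup_compl (fun i => (hηm i).comap_le) hη.iIndep A)
      (measurable_iff_comap_le.mp hg))
    (measurable_iff_comap_le.mp hf)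

def movingAverage {Ω : Type*} (a : ℕ → ℝ) (η : ℤ → Ω → ℝ) (t : ℤ) (ω : Ω) : ℝ :=
  ∑' k : ℕ, a k * η (t - k) ω

section MovingAverage

variable {Ω : Type*} {a : ℕ → ℝ} {η : ℤ → Ω → ℝ}

lemma summable_movingAverage (ha0 : ∀ k, 0 ≤ a k) (ha : Summable a)
    (hη : ∀ s ω, η s ω ∈ Set.Icc (0 : ℝ) 1) (t : ℤ) (ω : Ω) :
    Summable fun k => a k * η (t - k) ω :=
  .of_nonneg_of_le (fun k => mul_nonneg (ha0 k) (hη _ ω).1)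
    (fun k => mul_le_of_le_one_right (ha0 k) (hη _ ω).2) ha

lemma movingAverage_mem_Icc (ha0 : ∀ k, 0 ≤ a k) (ha : Summable a)
    (hη : ∀ s ω, η s ω ∈ Set.Icc (0 : ℝ) 1) (t : ℤ) (ω : Ω) :
    movingAverage a η t ω ∈ Set.Icc 0 (∑' k, a k) :=
  ⟨tsum_nonneg fun k => mul_nonneg (ha0 k) (hη _ ω).1,
    (summable_movingAverage ha0 ha hη t ω).tsum_le_tsum
      (fun k => mul_le_of_le_one_right (ha0 k) (hη _ ω).2) ha⟩

lemma movingAverage_eq_sum_add_movingAverage_nat_add (ha0 : ∀ k, 0 ≤ a k) (ha : Summable a)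
    (hη : ∀ s ω, η s ω ∈ Set.Icc (0 : ℝ) 1) (n : ℕ) (t : ℤ) (ω : Ω) :
    movingAverage a η t ω = ∑ k ∈ Finset.range n, a k * η (t - k) ω +
      movingAverage (fun k => a (k + n)) η (t - n) ω := by
  rw [movingAverage, ← (summable_movingAverage ha0 ha hη t ω).sum_add_tsum_nat_add n]
  congr 1
  refine tsum_congr fun k => ?_
  push_cast
  ring_nf

lemma abs_movingAverage_sub_sum_le (ha0 : ∀ k, 0 ≤ a k) (ha : Summable a)
    (hη : ∀ s ω, η s ω ∈ Set.Icc (0 : ℝ) 1) (n : ℕ) (t : ℤ) (ω : Ω) :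
    |movingAverage a η t ω -
        (∑ k ∈ Finset.range n, a k * η (t - k) ω + (∑' k, a (k + n)) / 2)| ≤
      (∑' k, a (k + n)) / 2 := by
  have htail := movingAverage_mem_Icc (fun k => ha0 (k + n))
    ((summable_nat_add_iff n).2 ha) hη (t - n) ω
  rw [movingAverage_eq_sum_add_movingAverage_nat_add ha0 ha hη n, abs_le]
  constructor <;> linarith [htail.1, htail.2]

lemma measurable_movingAverage {m : MeasurableSpace Ω} (ha0 : ∀ k, 0 ≤ a k) (ha : Summable a)
    (hη : ∀ s ω, η s ω ∈ Set.Icc (0 : ℝ) 1) {t : ℤ} (hηm : ∀ k : ℕ, Measurable[m] (η (t - k))) :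
    Measurable[m] (movingAverage a η t) :=
  measurable_of_tendsto_metrizable
    (fun _ => Finset.measurable_sum _ fun k _ => (hηm k).const_mul _)
    (tendsto_pi_nhds.2 fun ω => (summable_movingAverage ha0 ha hη t ω).hasSum.tendsto_sum_nat)

end MovingAverage

theorem LipschitzWith.integrable_comp {Ω E F : Type*} [MeasurableSpace Ω] {P : Measure Ω}
    [IsFiniteMeasure P] [NormedAddCommGroup E] [NormedAddCommGroup F] {K : NNReal} {G : E → F}
    (hG : LipschitzWith K G) {Y : Ω → E} (hY : Integrable Y P) :
    Integrable (fun ω => G (Y ω)) P := by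
  refine .mono' ((integrable_const ‖G 0‖).add (hY.norm.const_mul K))
    (hG.continuous.comp_aestronglyMeasurable hY.1) (ae_of_all _ fun ω => ?_)
  calc ‖G (Y ω)‖ ≤ ‖G 0‖ + ‖G (Y ω) - G 0‖ := norm_le_norm_add_norm_sub' _ _
    _ ≤ ‖G 0‖ + K * ‖Y ω‖ := by simpa using hG.norm_sub_le (Y ω) 0

theorem abs_cov_movingAverage_le {Ω : Type*} [MeasurableSpace Ω] {P : Measure Ω}
    [IsProbabilityMeasure P] {a : ℕ → ℝ} {η : ℤ → Ω → ℝ} (ha0 : ∀ k, 0 ≤ a k) (ha : Summable a)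
    (hη : ∀ s ω, η s ω ∈ Set.Icc (0 : ℝ) 1) (hηm : ∀ s, Measurable (η s))
    (hind : iIndepFun η P) {u n : ℕ} {j : ℤ} {Γ : Fin u → ℤ} (hΓ : ∀ i, Γ i + n ≤ j)
    {F : (Fin u → ℝ) → ℝ} {MF : ℝ} (hF : Measurable F) (hFM : ∀ x, |F x| ≤ MF)
    {G : ℝ → ℝ} {L : NNReal} (hG : LipschitzWith L G) :
    |cov P (fun ω => F fun i => movingAverage a η (Γ i) ω)
        (fun ω => G (movingAverage a η j ω))| ≤ (∑' k, a (k + n)) * MF * L := by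
  set Z := movingAverage a η
  set T := ∑' k, a (k + n)
  set A : Set ℤ := {s | s + n ≤ j}
  set head : Ω → ℝ := fun ω => ∑ k ∈ Finset.range n, a k * η (j - k) ω
  have hle : ∀ B : Set ℤ,
      (⨆ s ∈ B, MeasurableSpace.comap (η s) inferInstance) ≤ ‹MeasurableSpace Ω› := fun B =>
    iSup₂_le fun s _ => (hηm s).comap_le
  have hη_biSup : ∀ (B : Set ℤ) s, s ∈ B →
      Measurable[⨆ s ∈ B, MeasurableSpace.comap (η s) inferInstance] (η s) := fun B s hs =>
    .of_comap_le (le_biSup (fun s => MeasurableSpace.comap (η s) inferInstance) hs)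
  have hpast : Measurable[⨆ s ∈ A, MeasurableSpace.comap (η s) inferInstance]
      fun ω => F fun i => Z (Γ i) ω :=
    hF.comp <| @measurable_pi_lambda Ω (Fin u) (fun _ => ℝ)
      (⨆ s ∈ A, MeasurableSpace.comap (η s) inferInstance) _ _ fun i =>
      measurable_movingAverage ha0 ha hη fun k =>
        hη_biSup A _ (by simp only [A, Set.mem_ofPred_eq]; linarith [hΓ i, Int.natCast_nonneg k])
  have hhead : Measurable[⨆ s ∈ Aᶜ, MeasurableSpace.comap (η s) inferInstance] head :=
    Finset.measurable_sum _ fun k hk => (hη_biSup Aᶜ _ (by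
      simp only [A, Set.mem_compl_iff, Set.mem_ofPred_eq, not_le]
      linarith [(Nat.cast_lt (α := ℤ)).2 (Finset.mem_range.1 hk)])).const_mul _
  have hGZ : Integrable (fun ω => G (Z j ω)) P :=
    hG.integrable_comp <| .of_mem_Icc 0 (∑' k, a k)
      (measurable_movingAverage ha0 ha hη fun _ => hηm _).aemeasurable
      (ae_of_all _ (movingAverage_mem_Icc ha0 ha hη j))
  have hcoupling : ∀ ω, |G (Z j ω) - G (head ω + T / 2)| ≤ L * (T / 2) := fun ω => by
    simpa only [← Real.dist_eq] using (hG.dist_le_mul _ _).trans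
      (by gcongr; exact abs_movingAverage_sub_sum_le ha0 ha hη n j ω)
  have hindep : IndepFun (fun ω => F fun i => Z (Γ i) ω) (fun ω => G (head ω + T / 2)) P :=
    hind.indepFun_of_measurable_biSup_compl hηm A hpast
      (hG.continuous.measurable.comp (hhead.add_const _))
  calc _ ≤ 2 * MF * (L * (T / 2)) :=
        abs_cov_le_of_indepFun_of_abs_sub_le (hpast.mono (hle A) le_rfl).aestronglyMeasurable
          (fun ω => hFM _) hGZ
          (hG.continuous.measurable.comp
            ((hhead.mono (hle Aᶜ) le_rfl).add_const _)).aestronglyMeasurable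
          hcoupling hindep
    _ = T * MF * L := by ring

lemma hasSum_two_rpow_neg_sub_one_nat_add (n : ℕ) :
    HasSum (fun k : ℕ => (2 : ℝ) ^ (-((k + n : ℕ) : ℝ) - 1)) ((2 : ℝ) ^ (-(n : ℝ))) := by
  have hpow : ∀ m : ℕ, (2 : ℝ) ^ (-(m : ℝ) - 1) = 2⁻¹ ^ (m + 1) := fun m => by
    rw [← Real.rpow_natCast, Real.inv_rpow zero_le_two, ← Real.rpow_neg zero_le_two]
    push_cast
    ring_nf
  have hterm : (fun k : ℕ => (2 : ℝ) ^ (-((k + n : ℕ) : ℝ) - 1)) =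
      fun k => 2⁻¹ ^ (n + 1) * 2⁻¹ ^ k := funext fun k => by rw [hpow]; ring
  have hsum : (2 : ℝ) ^ (-(n : ℝ)) = 2⁻¹ ^ (n + 1) * (1 - 2⁻¹)⁻¹ := by
    rw [Real.rpow_neg zero_le_two, Real.rpow_natCast, ← inv_pow, pow_succ]
    norm_num [mul_assoc]
  rw [hterm, hsum]
  exact (hasSum_geometric_of_lt_one (by norm_num) (by norm_num)).mul_left _

lemma indicator_one_comp_ae_eq_of_bernoulli {Ω : Type*} [MeasurableSpace Ω] {P : Measure Ω}
    [IsProbabilityMeasure P] {ζ : Ω → ℝ} (hζ : Measurable ζ)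
    (hber : P {ω | ζ ω = 1} = 1 / 2 ∧ P {ω | ζ ω = 0} = 1 / 2) :
    ({1} : Set ℝ).indicator 1 ∘ ζ =ᵐ[P] ζ := by
  have h01 : ∀ᵐ ω ∂P, ζ ω = 1 ∨ ζ ω = 0 := by
    have h0 : MeasurableSet {ω | ζ ω = 0} := hζ (measurableSet_singleton 0)
    have h1 : MeasurableSet {ω | ζ ω = 1} := hζ (measurableSet_singleton 1)
    have hdisj : Disjoint {ω | ζ ω = 1} {ω | ζ ω = 0} :=
      Set.disjoint_left.2 fun ω (h1 : ζ ω = 1) (h0 : ζ ω = 0) => one_ne_zero (h1.symm.trans h0)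
    have hs : MeasurableSet {ω | ζ ω = 1 ∨ ζ ω = 0} := h1.union h0
    rw [ae_iff_measure_eq hs.nullMeasurableSet, Set.ofPred_or, measure_union hdisj h0,
      hber.1, hber.2, ENNReal.add_halves, measure_univ]
  filter_upwards [h01] with ω hω
  rcases hω with hω | hω <;> simp [hω]

lemma add_ceil_le_of_mem_VSet {s j : ℤ} {h : ℝ} (hs : s ∈ VSet j h) : s + ⌈h⌉₊ ≤ j := by
  obtain ⟨hsj, hh⟩ := hs
  have hcast : (((j - s).toNat : ℕ) : ℝ) = ((j - s : ℤ) : ℝ) := by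
    exact_mod_cast Int.toNat_of_nonneg (sub_nonneg.2 hsj)
  rw [abs_of_nonneg (by exact_mod_cast sub_nonneg.2 hsj), ← hcast] at hh
  have := Nat.ceil_le.2 hh
  omega

theorem bernoulli_ma_abs_cov_le {Ω : Type*} [MeasurableSpace Ω] (P : Measure Ω)
    [IsProbabilityMeasure P] (ξ : ℤ → Ω → ℝ) (hmeas : ∀ k, Measurable (ξ k))
    (hindep : iIndepFun ξ P)
    (hber : ∀ k, P {ω | ξ k ω = 1} = 1 / 2 ∧ P {ω | ξ k ω = 0} = 1 / 2)
    (X : ℤ → Ω → ℝ)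
    (hX : ∀ t ω, X t ω = ∑' j : ℕ, (2 : ℝ) ^ (-(j : ℝ) - 1) * ξ (t - j) ω)
    {h : ℝ} {u : ℕ} {j : ℤ} {Γ : Fin u → ℤ} (hΓ : ∀ i, Γ i ∈ VSet j h)
    {F : (Fin u → ℝ) → ℝ} {G : ℝ → ℝ} {MF LG : ℝ} (hF : Measurable F) (hFM : ∀ x, |F x| ≤ MF)
    (hG : ∀ x y, |G x - G y| ≤ LG * |x - y|) :
    |cov P (fun ω => F (fun i => X (Γ i) ω)) (fun ω => G (X j ω))| ≤
      (2 : ℝ) ^ (-h) * MF * LG := by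
  set a : ℕ → ℝ := fun k => (2 : ℝ) ^ (-(k : ℝ) - 1)
  -- `ξ` is `{0, 1}`-valued only almost surely, and where the series for `X` diverges its `tsum`
  -- is `0`; the argument therefore runs on the everywhere `{0, 1}`-valued modification `η`.
  set η : ℤ → Ω → ℝ := fun k => ({1} : Set ℝ).indicator 1 ∘ ξ k
  have hindicator : Measurable (({1} : Set ℝ).indicator (1 : ℝ → ℝ)) :=
    measurable_const.indicator (measurableSet_singleton 1)
  have hXη : ∀ᵐ ω ∂P, ∀ t, X t ω = movingAverage a η t ω := by
    filter_upwards [ae_all_iff.2 fun k => indicator_one_comp_ae_eq_of_bernoulli (hmeas k) (hber k)]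
      with ω hω t
    simp only [hX, movingAverage, a, η, hω]
  have hMF : 0 ≤ MF := (abs_nonneg _).trans (hFM 0)
  have hLG : 0 ≤ LG := by simpa using (abs_nonneg _).trans (hG 1 0)
  have hLip : LipschitzWith LG.toNNReal G := .of_dist_le_mul fun x y => by
    simpa only [Real.coe_toNNReal _ hLG, Real.dist_eq] using hG x y
  have ha : Summable a := by simpa using (hasSum_two_rpow_neg_sub_one_nat_add 0).summable
  have htail : ∑' k, a (k + ⌈h⌉₊) = 2 ^ (-(⌈h⌉₊ : ℝ)) :=
    (hasSum_two_rpow_neg_sub_one_nat_add _).tsum_eq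
  have hbound := abs_cov_movingAverage_le (P := P) (a := a) (η := η) (fun k => by positivity) ha
    (fun s ω => by by_cases hs : ξ s ω = 1 <;> simp [η, hs])
    (fun s => hindicator.comp (hmeas s)) (hindep.comp _ fun _ => hindicator)
    (fun i => add_ceil_le_of_mem_VSet (hΓ i)) hF hFM hLip
  rw [Real.coe_toNNReal _ hLG, htail] at hbound
  rw [cov_congr_ae (f' := fun ω => F fun i => movingAverage a η (Γ i) ω)
    (g' := fun ω => G (movingAverage a η j ω))
    (by filter_upwards [hXη] with ω hω; simp only [hω])
    (by filter_upwards [hXη] with ω hω; simp only [hω])]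
  refine hbound.trans ?_
  gcongr
  · norm_num
  · exact Nat.le_ceil h

/-- Proposition 2.9, positive part: the stationary process
`X_t = ∑_{j≥0} 2^{-j-1} ξ_{t-j}`, with `(ξ_k)` i.i.d. Bernoulli(1/2), is θ-lex weakly
dependent, with θ-lex coefficients bounded by `2^{-h}`. -/
theorem bernoulli_ma_thetaLexWeaklyDependent
    {Ω : Type*} [MeasurableSpace Ω] (P : Measure Ω) [IsProbabilityMeasure P]
    (ξ : ℤ → Ω → ℝ) (hmeas : ∀ k, Measurable (ξ k))
    (hindep : iIndepFun ξ P)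
    (hber : ∀ k, P {ω | ξ k ω = 1} = 1 / 2 ∧ P {ω | ξ k ω = 0} = 1 / 2)
    (X : ℤ → Ω → ℝ)
    (hX : ∀ t ω, X t ω = ∑' j : ℕ, (2 : ℝ) ^ (-(j : ℝ) - 1) * ξ (t - j) ω) :
    (∀ h : ℕ, 1 ≤ h →
      ∀ (u : ℕ) (j : ℤ) (Γ : Fin u → ℤ),
        Function.Injective Γ → (∀ i, Γ i ∈ VSet j (h : ℝ)) →
        ∀ (F : (Fin u → ℝ) → ℝ) (G : ℝ → ℝ) (MF LG : ℝ),
          Measurable F → (∀ x, |F x| ≤ MF) →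
          Measurable G → (∃ MG, ∀ x, |G x| ≤ MG) →
          (∀ x y, |G x - G y| ≤ LG * |x - y|) →
          |cov P (fun ω => F (fun i => X (Γ i) ω)) (fun ω => G (X j ω))| ≤
            (2 : ℝ) ^ (-(h : ℝ)) * MF * LG) ∧
    ∃ θ : ℝ → ℝ, Tendsto θ atTop (𝓝 0) ∧ HasThetaLexBound P X θ := by
  refine ⟨fun _ _ _ _ _ _ hΓ _ _ _ _ hF hFM _ _ hG =>
    bernoulli_ma_abs_cov_le P ξ hmeas hindep hber X hX hΓ hF hFM hG,
    fun h => (2 : ℝ) ^ (-h), ?_, fun _ _ _ _ _ _ hΓ _ _ _ _ hF hFM _ _ hG =>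
    bernoulli_ma_abs_cov_le P ξ hmeas hindep hber X hX hΓ hF hFM hG⟩
  refine (tendsto_rpow_atTop_of_base_lt_one 2⁻¹ (by norm_num) (by norm_num)).congr fun h => ?_
  rw [Real.inv_rpow zero_le_two, Real.rpow_neg zero_le_two]

end
end

section
/- Let (xi_k)_{k in Z} be a sequence of independent random variables with P(xi_k = 1) = P(xi_k = 0) = 1/2 for all k, and define the stationary process X_t = sum_{j=0}^infinity 2^{-j-1} xi_{t-j} for t in Z. Then for every h >= 1 one has alpha(h) >= 1/4 and alpha_{infty,1}(h) >= 1/4; in particular X is neither alpha-mixing nor alpha_{infty,1}-mixing. (Indeed the event A = {X_0 <= 1/2} satisfies P(A) = 1/2, A belongs to sigma(X_s : s <= 0), and, up to a null set, A belongs to sigma(X_h) for every h >= 1, whence |P(A)P(A) - P(A intersect A)| = 1/4.) -/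
/-!
Almost surely every `ξ k` is `0` or `1` and some `ξ k` with `k < 0` vanishes, so
`X_n = 0.ξ_n ξ_{n-1} ξ_{n-2} …` is a binary expansion not ending in `1`s, hence the one that
`Real.digits` reads off. Hence the `n`-th binary digit of `X_n` is `ξ_0`: the event
`{ξ_0 = 1}` of probability `1/2` is, up to a null set, both in `σ(X_0)` and in `σ(X_n)` for every
`n`, and an event `A` lying in both σ-algebras gives `|P(A)² - P(A)| = 1/4`.
-/
open MeasureTheory Filter Topology ProbabilityTheory

noncomputable section

/-- The σ-algebra generated by the random variables `X s`, `s ∈ S`. -/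
def sigmaOn {Ω : Type*} [MeasurableSpace Ω] {I : Type*} (X : I → Ω → ℝ) (S : Set I) :
    MeasurableSpace Ω :=
  ⨆ s ∈ S, MeasurableSpace.comap (X s) inferInstance

/-- Rosenblatt's strong mixing coefficient of two sub-σ-algebras. -/
def alphaOf {Ω : Type*} [MeasurableSpace Ω] (P : Measure Ω)
    (M N : MeasurableSpace Ω) : ℝ :=
  sSup {r | ∃ A B : Set Ω, MeasurableSet[M] A ∧ MeasurableSet[N] B ∧
    r = |(P A).toReal * (P B).toReal - (P (A ∩ B)).toReal|}

/-- The strong mixing coefficient `α(h) = α(σ(X_s : s ≤ 0), σ(X_s : s ≥ h))` of a process. -/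
def alphaProcess {Ω : Type*} [MeasurableSpace Ω] (P : Measure Ω) (X : ℤ → Ω → ℝ)
    (h : ℝ) : ℝ :=
  alphaOf P (sigmaOn X {s : ℤ | s ≤ 0}) (sigmaOn X {s : ℤ | h ≤ (s : ℝ)})

/-- The strong mixing coefficient `α_{∞,1}(h)` of a process on `ℤ`. -/
def alphaInfOne {Ω : Type*} [MeasurableSpace Ω] (P : Measure Ω) (X : ℤ → Ω → ℝ)
    (h : ℝ) : ℝ :=
  sSup {r | ∃ (Γ : Finset ℤ) (j : ℤ),
    (∀ i ∈ Γ, h ≤ |((i - j : ℤ) : ℝ)|) ∧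
    r = alphaOf P (sigmaOn X (Γ : Set ℤ)) (sigmaOn X {j})}

namespace Real

variable {b : ℕ}

theorem mul_ofDigits (x : ℕ → Fin b) :
    b * ofDigits x = x 0 + ofDigits (fun i ↦ x (i + 1)) := by
  have hb : (b : ℝ) ≠ 0 := by have := (x 0).pos; positivity
  rw [ofDigits_eq_sum_add_ofDigits x 1]
  simp only [Finset.range_one, ofDigitsTerm, Finset.sum_singleton, zero_add, pow_one]
  field_simp

theorem exists_pow_mul_ofDigits (x : ℕ → Fin b) (n : ℕ) :
    ∃ K : ℕ, (b : ℝ) ^ (n + 1) * ofDigits x =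
      (b * K + x n : ℕ) + ofDigits (fun i ↦ x (i + (n + 1))) := by
  induction n with
  | zero => exact ⟨0, by simpa using mul_ofDigits x⟩
  | succ n ih =>
    obtain ⟨K, hK⟩ := ih
    refine ⟨b * K + x n, ?_⟩
    have hshift := mul_ofDigits (fun i ↦ x (i + (n + 1)))
    simp only [zero_add, add_assoc, add_comm 1] at hshift
    rw [pow_succ', mul_assoc, hK, mul_add, hshift]
    push_cast
    ring

theorem ofDigits_lt_ofDigits {x y : ℕ → Fin b} (hle : ∀ i, x i ≤ y i) {m : ℕ}
    (hlt : x m < y m) : ofDigits x < ofDigits y := by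
  refine Summable.tsum_lt_tsum (i := m) (fun i ↦ ?_) ?_ summable_ofDigitsTerm
    summable_ofDigitsTerm <;> unfold ofDigitsTerm
  · gcongr
    exact hle i
  · have := (x 0).pos
    exact mul_lt_mul_of_pos_right (by exact_mod_cast hlt) (by positivity)

theorem ofDigits_lt_one [NeZero b] {x : ℕ → Fin (b + 1)} {m : ℕ} (hm : x m ≠ Fin.last b) :
    ofDigits x < 1 :=
  ofDigits_const_last_eq_one b ▸
    ofDigits_lt_ofDigits (fun i ↦ Fin.le_last (x i)) (Fin.lt_last_iff_ne_last.2 hm)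

theorem digits_ofDigits_apply [NeZero b] {x : ℕ → Fin (b + 1)} {n : ℕ}
    (hx : ∃ m > n, x m ≠ Fin.last b) : digits (ofDigits x) (b + 1) n = x n := by
  obtain ⟨m, hnm, hm⟩ := hx
  obtain ⟨K, hK⟩ := exists_pow_mul_ofDigits x n
  have htail : ofDigits (fun i ↦ x (i + (n + 1))) < 1 :=
    ofDigits_lt_one (m := m - (n + 1)) (by rwa [Nat.sub_add_cancel hnm])
  have hfloor : ⌊ofDigits x * ((b + 1 : ℕ) : ℝ) ^ (n + 1)⌋₊ = (b + 1) * K + x n := by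
    rw [mul_comm, hK, add_comm, Nat.floor_add_natCast (ofDigits_nonneg _),
      Nat.floor_eq_zero.2 htail, zero_add]
  ext
  rw [digits]
  push_cast at hfloor ⊢
  rw [hfloor, Fin.val_ofNat, Nat.mul_add_mod, Nat.mod_eq_of_lt (x n).isLt]

theorem tsum_two_rpow_mul_eq_ofDigits {z : ℕ → ℝ} (hz : ∀ j, z j = 0 ∨ z j = 1) :
    ∑' j : ℕ, (2 : ℝ) ^ (-(j : ℝ) - 1) * z j =
      ofDigits (fun j ↦ if z j = 1 then 1 else 0 : ℕ → Fin 2) := by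
  refine tsum_congr fun j ↦ ?_
  rw [ofDigitsTerm, show -(j : ℝ) - 1 = -((j + 1 : ℕ) : ℝ) by push_cast; ring,
    rpow_neg zero_le_two, rpow_natCast, mul_comm]
  rcases hz j with h | h <;> simp [h]

theorem digits_tsum_two_rpow_mul_eq_one_iff {y : ℤ → ℝ} (h01 : ∀ k, y k = 0 ∨ y k = 1)
    (hne : ∃ k < 0, y k ≠ 1) (n : ℕ) :
    digits (∑' j : ℕ, (2 : ℝ) ^ (-(j : ℝ) - 1) * y (n - j)) 2 n = 1 ↔ y 0 = 1 := by
  obtain ⟨k, hk, hyk⟩ := hne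
  rw [tsum_two_rpow_mul_eq_ofDigits fun j ↦ h01 _, digits_ofDigits_apply (b := 1)]
  · simp
  · refine ⟨(n - k).toNat, by omega, ?_⟩
    rw [show (n : ℤ) - (n - k).toNat = k by omega]
    simp [hyk]

theorem measurable_digits (b : ℕ) [NeZero b] (i : ℕ) :
    Measurable fun x : ℝ ↦ digits x b i :=
  measurable_from_nat.comp (Nat.measurable_floor.comp (measurable_id.mul_const _))

end Real

section Bernoulli

variable {Ω : Type*} [MeasurableSpace Ω] {P : Measure Ω}

theorem ae_eq_zero_or_eq_one [IsProbabilityMeasure P] {ξ : Ω → ℝ} (hξ : Measurable ξ)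
    (h : P {ω | ξ ω = 1} = 1 / 2 ∧ P {ω | ξ ω = 0} = 1 / 2) :
    ∀ᵐ ω ∂P, ξ ω = 0 ∨ ξ ω = 1 := by
  have hdisj : Disjoint {ω | ξ ω = 0} {ω | ξ ω = 1} :=
    Set.disjoint_left.2 fun ω h0 h1 ↦ by simp_all
  have hunion : P ({ω | ξ ω = 0} ∪ {ω | ξ ω = 1}) = P Set.univ := by
    rw [measure_union hdisj (hξ (measurableSet_singleton 1)), h.1, h.2, ENNReal.add_halves,
      measure_univ]
  exact (ae_mem_iff_measure_eq ((hξ (measurableSet_singleton 0)).union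
    (hξ (measurableSet_singleton 1))).nullMeasurableSet).2 hunion

theorem ae_exists_ne_of_iIndepFun {ι β : Type*} [MeasurableSpace β] [MeasurableSingletonClass β]
    {ξ : ι → Ω → β} (hξ : iIndepFun ξ P) {c : β} {p : ENNReal} (hp : p < 1)
    (hle : ∀ k, P (ξ k ⁻¹' {c}) ≤ p) {S : Set ι} (hS : S.Infinite) :
    ∀ᵐ ω ∂P, ∃ k ∈ S, ξ k ω ≠ c := by
  rw [ae_iff]
  push Not
  refine le_antisymm (ge_of_tendsto' (ENNReal.tendsto_pow_atTop_nhds_zero_of_lt_one hp)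
    fun n ↦ ?_) zero_le
  obtain ⟨T, hTS, hTn⟩ := hS.exists_subset_card_eq n
  calc P {ω | ∀ k ∈ S, ξ k ω = c}
      ≤ P (⋂ k ∈ T, ξ k ⁻¹' {c}) := measure_mono fun ω hω ↦ by
        simpa using fun k hk ↦ hω k (hTS hk)
    _ = ∏ k ∈ T, P (ξ k ⁻¹' {c}) :=
        hξ.meas_biInter fun k _ ↦ ⟨{c}, measurableSet_singleton c, rfl⟩
    _ ≤ p ^ n := hTn ▸ Finset.prod_le_pow_card _ _ _ fun k _ ↦ hle k

end Bernoulli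

section Mixing

variable {Ω : Type*} [mΩ : MeasurableSpace Ω] {P : Measure Ω} [IsProbabilityMeasure P]

-- The σ-algebras `M`, `N` below become local instances, so `mΩ` has to be passed explicitly.

theorem comap_le_sigmaOn {I : Type*} (X : I → Ω → ℝ) {S : Set I} {t : I} (ht : t ∈ S) :
    MeasurableSpace.comap (X t) inferInstance ≤ sigmaOn X S :=
  le_iSup₂ (f := fun s (_ : s ∈ S) ↦ MeasurableSpace.comap (X s) inferInstance) t ht

theorem abs_toReal_mul_sub_le_one (A B : Set Ω) :
    |(P A).toReal * (P B).toReal - (P (A ∩ B)).toReal| ≤ 1 := by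
  have hA : (P A).toReal ≤ 1 := measureReal_le_one (μ := P)
  have hB : (P B).toReal ≤ 1 := measureReal_le_one (μ := P)
  have hAB : (P (A ∩ B)).toReal ≤ 1 := measureReal_le_one (μ := P)
  rw [abs_le]
  constructor <;> nlinarith [ENNReal.toReal_nonneg (a := P A), ENNReal.toReal_nonneg (a := P B),
    ENNReal.toReal_nonneg (a := P (A ∩ B))]

theorem alphaOf_le_one (M N : MeasurableSpace Ω) : @alphaOf Ω mΩ P M N ≤ 1 :=
  csSup_le ⟨_, ∅, ∅, @MeasurableSet.empty _ M, @MeasurableSet.empty _ N, rfl⟩ <| by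
    rintro r ⟨A, B, -, -, rfl⟩
    exact @abs_toReal_mul_sub_le_one Ω mΩ P _ A B

theorem le_alphaOf {M N : MeasurableSpace Ω} {A B : Set Ω} (hA : MeasurableSet[M] A)
    (hB : MeasurableSet[N] B) :
    |(P A).toReal * (P B).toReal - (P (A ∩ B)).toReal| ≤ @alphaOf Ω mΩ P M N := by
  refine le_csSup ⟨1, ?_⟩ ⟨A, B, hA, hB, rfl⟩
  rintro r ⟨A, B, -, -, rfl⟩
  exact @abs_toReal_mul_sub_le_one Ω mΩ P _ A B

theorem le_alphaOf_of_ae_eq {M N : MeasurableSpace Ω} {A B : Set Ω} (hA : MeasurableSet[M] A)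
    (hB : MeasurableSet[N] B) (hAB : A =ᵐ[P] B) :
    (P A).toReal * (1 - (P A).toReal) ≤ @alphaOf Ω mΩ P M N := by
  have hinter : P (A ∩ B) = P A := by
    rw [measure_congr ((EventuallyEq.refl _ A).inter hAB.symm), Set.inter_self]
  have hle : (P A).toReal ≤ 1 := measureReal_le_one (μ := P)
  have hnonneg : 0 ≤ (P A).toReal := ENNReal.toReal_nonneg
  calc (P A).toReal * (1 - (P A).toReal)
      = |(P A).toReal * (P B).toReal - (P (A ∩ B)).toReal| := by
        rw [hinter, ← measure_congr hAB, abs_of_nonpos (by nlinarith)]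
        ring
    _ ≤ @alphaOf Ω mΩ P M N := @le_alphaOf Ω mΩ P _ M N A B hA hB

theorem le_alphaProcess_of_ae_eq {X : ℤ → Ω → ℝ} {A B : Set Ω} {n : ℤ} {h : ℝ}
    (hA : MeasurableSet[MeasurableSpace.comap (X 0) inferInstance] A)
    (hB : MeasurableSet[MeasurableSpace.comap (X n) inferInstance] B) (hn : h ≤ n)
    (hAB : A =ᵐ[P] B) :
    (P A).toReal * (1 - (P A).toReal) ≤ alphaProcess P X h :=
  le_alphaOf_of_ae_eq (comap_le_sigmaOn X (S := {s : ℤ | s ≤ 0}) (by simp) A hA)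
    (comap_le_sigmaOn X (S := {s : ℤ | h ≤ (s : ℝ)}) hn B hB) hAB

theorem le_alphaInfOne_of_ae_eq {X : ℤ → Ω → ℝ} {A B : Set Ω} {i j : ℤ} {h : ℝ}
    (hA : MeasurableSet[MeasurableSpace.comap (X i) inferInstance] A)
    (hB : MeasurableSet[MeasurableSpace.comap (X j) inferInstance] B)
    (hij : h ≤ |((i - j : ℤ) : ℝ)|)
    (hAB : A =ᵐ[P] B) :
    (P A).toReal * (1 - (P A).toReal) ≤ alphaInfOne P X h := by
  have hΓ : ∀ k ∈ ({i} : Finset ℤ), h ≤ |((k - j : ℤ) : ℝ)| := by simpa using hij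
  have hA' : MeasurableSet[sigmaOn X (({i} : Finset ℤ) : Set ℤ)] A :=
    comap_le_sigmaOn X (by simp) A hA
  have hB' : MeasurableSet[sigmaOn X {j}] B := comap_le_sigmaOn X (Set.mem_singleton j) B hB
  refine (le_alphaOf_of_ae_eq hA' hB' hAB).trans (le_csSup ⟨1, ?_⟩ ⟨{i}, j, hΓ, rfl⟩)
  rintro r ⟨Γ, k, -, rfl⟩
  exact alphaOf_le_one _ _

end Mixing

/-- Proposition 2.9, negative part: the stationary process
`X_t = ∑_{j≥0} 2^{-j-1} ξ_{t-j}`, with `(ξ_k)` i.i.d. Bernoulli(1/2), satisfies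
`α(h) ≥ 1/4` and `α_{∞,1}(h) ≥ 1/4` for every `h ≥ 1`; in particular it is neither
α-mixing nor `α_{∞,1}`-mixing. -/
theorem bernoulli_ma_not_mixing
    {Ω : Type*} [MeasurableSpace Ω] (P : Measure Ω) [IsProbabilityMeasure P]
    (ξ : ℤ → Ω → ℝ) (hmeas : ∀ k, Measurable (ξ k))
    (hindep : iIndepFun ξ P)
    (hber : ∀ k, P {ω | ξ k ω = 1} = 1 / 2 ∧ P {ω | ξ k ω = 0} = 1 / 2)
    (X : ℤ → Ω → ℝ)
    (hX : ∀ t ω, X t ω = ∑' j : ℕ, (2 : ℝ) ^ (-(j : ℝ) - 1) * ξ (t - j) ω) :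
    (∀ h : ℝ, 1 ≤ h → 1 / 4 ≤ alphaProcess P X h ∧ 1 / 4 ≤ alphaInfOne P X h) ∧
    ¬ Tendsto (alphaProcess P X) atTop (𝓝 0) ∧
    ¬ Tendsto (alphaInfOne P X) atTop (𝓝 0) := by
  have hgood : ∀ᵐ ω ∂P, (∀ k, ξ k ω = 0 ∨ ξ k ω = 1) ∧ ∃ k < 0, ξ k ω ≠ 1 :=
    (ae_all_iff.2 fun k ↦ ae_eq_zero_or_eq_one (hmeas k) (hber k)).and
      (ae_exists_ne_of_iIndepFun hindep (by norm_num) (fun k ↦ (hber k).1.le)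
        (Set.Iio_infinite 0))
  set D : ℕ → Set Ω := fun n ↦ {ω | Real.digits (X n ω) 2 n = 1}
  have hD_meas (n : ℕ) : MeasurableSet[MeasurableSpace.comap (X n) inferInstance] (D n) :=
    ⟨_, Real.measurable_digits 2 n (measurableSet_singleton 1), rfl⟩
  have hD_ae (n : ℕ) : D n =ᵐ[P] {ω | ξ 0 ω = 1} := by
    filter_upwards [hgood] with ω hω
    simp only [D, hX]
    exact propext (Real.digits_tsum_two_rpow_mul_eq_one_iff hω.1 hω.2 n)
  have hPD : (P (D 0)).toReal * (1 - (P (D 0)).toReal) = 1 / 4 := by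
    rw [measure_congr (hD_ae 0), (hber 0).1]
    norm_num
  have hbound (h : ℝ) : 1 / 4 ≤ alphaProcess P X h ∧ 1 / 4 ≤ alphaInfOne P X h := by
    have hn : h ≤ ⌈h⌉₊ := Nat.le_ceil h
    have hAB := (hD_ae 0).trans (hD_ae ⌈h⌉₊).symm
    rw [← hPD]
    exact ⟨le_alphaProcess_of_ae_eq (hD_meas 0) (hD_meas _) (by exact_mod_cast hn) hAB,
      le_alphaInfOne_of_ae_eq (hD_meas 0) (hD_meas _) (by simpa using hn) hAB⟩
  refine ⟨fun h _ ↦ hbound h, fun hT ↦ ?_, fun hT ↦ ?_⟩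
  · linarith [ge_of_tendsto hT (.of_forall fun h ↦ (hbound h).1)]
  · linarith [ge_of_tendsto hT (.of_forall fun h ↦ (hbound h).2)]

end
end
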